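/- arXiv:1304.7168 — 6 statements merged into one kernel-verified Lean document; each statement's English description precedes it below -/
import Mathlib

section
/- Let Π be a non-deterministic logic program and let I₁ and I₂ be non-deterministic models of Π. Then the intersection I₁ ∩ I₂ is also a non-deterministic model of Π. -/
/-- A non-deterministic logic rule: a head (a non-deterministic atom, i.e. a set
of atoms) and a finite body of non-deterministic atoms. -/
structure NDRule (B : Type*) where
  head : Set B
  body : Finset (Set B)

/-- A non-deterministic interpretation `I` satisfies a rule if the head belongs
to `I` whenever every body atom belongs to `I`. -/
def ndSat {B : Type*} (I : Set (Set B)) (r : NDRule B) : Prop :=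
  (∀ b ∈ r.body, b ∈ I) → r.head ∈ I

/-- `I` is a non-deterministic model of the program `prog` if it satisfies every
rule of `prog`. -/
def ndModel {B : Type*} (prog : Set (NDRule B)) (I : Set (Set B)) : Prop :=
  ∀ r ∈ prog, ndSat I r

/-- The intersection of two non-deterministic models of a non-deterministic
logic program is again a non-deterministic model of the program. -/
theorem inter_ndModel {B : Type*} (prog : Set (NDRule B)) (I₁ I₂ : Set (Set B))
    (h₁ : ndModel prog I₁) (h₂ : ndModel prog I₂) :
    ndModel prog (I₁ ∩ I₂) := by
  intro r hr hb
  exact ⟨h₁ r hr fun b h => (hb b h).1, h₂ r hr fun b h => (hb b h).2⟩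
end

section
/- Let Υ be a deterministic definite logic program over B and let Π be its translation into a non-deterministic logic program. Then I ⊆ B is the least Herbrand model of Υ if and only if the set {{a} | a ∈ I} of singleton non-deterministic atoms is the least non-deterministic model of Π. -/
/-- A deterministic definite logic rule over `B`: a head atom and a finite body
of atoms. -/
structure DetRule (B : Type*) where
  head : B
  body : Finset B

/-- A Herbrand interpretation `I ⊆ B` is a Herbrand model of a deterministic
definite logic program if for every rule the head belongs to `I` whenever every
body atom belongs to `I`. -/
def detModel {B : Type*} (prog : Set (DetRule B)) (I : Set B) : Prop :=
  ∀ r ∈ prog, (∀ b ∈ r.body, b ∈ I) → r.head ∈ I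

/-- The embedding of atoms into non-deterministic atoms as singletons. -/
def singEmb (B : Type*) : B ↪ Set B :=
  ⟨fun a => ({a} : Set B), Set.singleton_injective⟩

/-- Translation of a deterministic definite rule: replace each atom by the
corresponding singleton non-deterministic atom. -/
def ndTranslateRule {B : Type*} (r : DetRule B) : NDRule B :=
  ⟨{r.head}, r.body.map (singEmb B)⟩

/-- Translation of a deterministic definite logic program into a
non-deterministic logic program. -/
def ndTranslate {B : Type*} (prog : Set (DetRule B)) : Set (NDRule B) :=
  ndTranslateRule '' prog

/-- `I ⊆ B` is the least Herbrand model of a deterministic definite logic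
program `Υ` (a Herbrand model contained in every Herbrand model) if and only if
the set of singleton non-deterministic atoms `{{a} | a ∈ I}` is the least
non-deterministic model of the translation of `Υ`. -/
theorem leastDetModel_iff_leastNdModel_translate {B : Type*}
    (Υ : Set (DetRule B)) (I : Set B) :
    (detModel Υ I ∧ ∀ J, detModel Υ J → I ⊆ J) ↔
      (ndModel (ndTranslate Υ) ((fun a => ({a} : Set B)) '' I) ∧
        ∀ J, ndModel (ndTranslate Υ) J → ((fun a => ({a} : Set B)) '' I) ⊆ J) := by
  have keyModel : ∀ J : Set (Set B),
      ndModel (ndTranslate Υ) J ↔ detModel Υ {a | ({a} : Set B) ∈ J} := by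
    intro J
    constructor
    · intro h r hr hb
      have := h (ndTranslateRule r) ⟨r, hr, rfl⟩
      apply this
      intro b hbmem
      simp only [ndTranslateRule, Finset.mem_map, singEmb] at hbmem
      obtain ⟨a, ha, rfl⟩ := hbmem
      exact hb a ha
    · intro h r hr
      obtain ⟨r0, hr0, rfl⟩ := hr
      intro hb
      exact h r0 hr0 fun b hbm =>
        hb ({b} : Set B) (by
          simp only [ndTranslateRule, Finset.mem_map, singEmb]
          exact ⟨b, hbm, rfl⟩)
  have img : ∀ K : Set B, {a | ({a} : Set B) ∈ (fun a => ({a} : Set B)) '' K} = K := by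
    intro K
    ext a
    simp only [Set.mem_setOf_eq, Set.mem_image]
    constructor
    · rintro ⟨b, hb, hba⟩
      rwa [← Set.singleton_injective hba]
    · exact fun h => ⟨a, h, rfl⟩
  constructor
  · rintro ⟨hm, hl⟩
    refine ⟨(keyModel _).2 (by rwa [img]), ?_⟩
    intro J hJ
    have := hl _ ((keyModel J).1 hJ)
    rintro s ⟨a, ha, rfl⟩
    exact this ha
  · rintro ⟨hm, hl⟩
    have hm' := (keyModel _).1 hm
    rw [img] at hm'
    refine ⟨hm', ?_⟩
    intro J hJ a ha
    have hndJ : ndModel (ndTranslate Υ) ((fun a => ({a} : Set B)) '' J) :=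
      (keyModel _).2 (by rwa [img])
    have := hl _ hndJ ⟨a, ha, rfl⟩
    obtain ⟨b, hb, hba⟩ := this
    rwa [← Set.singleton_injective hba]
end

section
/- Every stable non-deterministic model of a normal non-deterministic logic program Π is a minimal non-deterministic model of Π: it is a non-deterministic model of Π and no proper subset of it is a non-deterministic model of Π. -/
/-- A normal non-deterministic logic rule: a head (a non-deterministic atom), a
finite positive body and a finite negative body of non-deterministic atoms. -/
structure NNDRule (B : Type*) where
  head : Set B
  pos : Finset (Set B)
  neg : Finset (Set B)

/-- A non-deterministic interpretation `I` satisfies a normal rule if the head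
belongs to `I` whenever every positive body atom belongs to `I` and no negative
body atom belongs to `I`. -/
def nSat {B : Type*} (I : Set (Set B)) (r : NNDRule B) : Prop :=
  ((∀ b ∈ r.pos, b ∈ I) ∧ (∀ b ∈ r.neg, b ∉ I)) → r.head ∈ I

/-- `I` is a non-deterministic model of a normal non-deterministic logic
program if it satisfies every rule. -/
def nModel {B : Type*} (prog : Set (NNDRule B)) (I : Set (Set B)) : Prop :=
  ∀ r ∈ prog, nSat I r

/-- The non-deterministic reduct of `prog` with respect to `I`: the
negation-free rules `head ← positive body` for each rule of `prog` none of
whose negative body atoms belongs to `I`. -/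
def ndReduct {B : Type*} (prog : Set (NNDRule B)) (I : Set (Set B)) : Set (NDRule B) :=
  {r' | ∃ r ∈ prog, (∀ b ∈ r.neg, b ∉ I) ∧ r' = ⟨r.head, r.pos⟩}

/-- `I` is a stable non-deterministic model of `prog` if `I` is the least
non-deterministic model of the reduct of `prog` with respect to `I`. -/
def isStableND {B : Type*} (prog : Set (NNDRule B)) (I : Set (Set B)) : Prop :=
  ndModel (ndReduct prog I) I ∧ ∀ J, ndModel (ndReduct prog I) J → I ⊆ J

/-- Every stable non-deterministic model of a normal non-deterministic logic
program is a minimal non-deterministic model of the program: it is a model,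
and no proper subset of it is a model. -/
theorem stable_isMinimal_nModel {B : Type*} (prog : Set (NNDRule B))
    (I : Set (Set B)) (hI : isStableND prog I) :
    nModel prog I ∧ ∀ J : Set (Set B), J ⊂ I → ¬ nModel prog J := by
  obtain ⟨hmod, hleast⟩ := hI
  constructor
  · intro r hr ⟨hpos, hneg⟩
    exact hmod ⟨r.head, r.pos⟩ ⟨r, hr, hneg, rfl⟩ hpos
  · intro J hJI hJ
    have hJred : ndModel (ndReduct prog I) J := by
      rintro r' ⟨r, hr, hneg, rfl⟩ hpos
      exact hJ r hr ⟨hpos, fun b hb hbJ => hneg b hb (hJI.1 hbJ)⟩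
    exact hJI.2 (hleast J hJred)
end

section
/- Let Π be a normal non-deterministic logic program and I a stable non-deterministic model of Π. Then T'_Π(I) = I, i.e. I is a fixpoint of the operator T'_Π. -/
/-- The immediate consequence operator `T'_Π` of a normal non-deterministic
logic program: the set of heads of rules all of whose positive body atoms
belong to `I` and none of whose negative body atoms belongs to `I`. -/
def nT' {B : Type*} (prog : Set (NNDRule B)) (I : Set (Set B)) : Set (Set B) :=
  {h | ∃ r ∈ prog, r.head = h ∧ (∀ b ∈ r.pos, b ∈ I) ∧ ∀ b ∈ r.neg, b ∉ I}

/-- The immediate consequence operator `T_Π` of the underlying negation-free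
program: the set of heads of rules all of whose positive body atoms belong to
`I`. -/
def nTpos {B : Type*} (prog : Set (NNDRule B)) (I : Set (Set B)) : Set (Set B) :=
  {h | ∃ r ∈ prog, r.head = h ∧ ∀ b ∈ r.pos, b ∈ I}

/-- Every stable non-deterministic model `I` of a normal non-deterministic
logic program is a fixpoint of the operator `T'_Π`. -/
theorem stable_fixpoint_nT' {B : Type*} (prog : Set (NNDRule B))
    (I : Set (Set B)) (hI : isStableND prog I) :
    nT' prog I = I := by
  obtain ⟨hmod, hmin⟩ := hI
  apply Set.Subset.antisymm
  · rintro h ⟨r, hr, rfl, hpos, hneg⟩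
    exact hmod ⟨r.head, r.pos⟩ ⟨r, hr, hneg, rfl⟩ hpos
  · have hJ : ndModel (ndReduct prog I) (nT' prog I ∩ I) := by
      rintro r' ⟨r, hr, hneg, rfl⟩ hbody
      refine ⟨⟨r, hr, rfl, fun b hb => (hbody b hb).2, hneg⟩, ?_⟩
      exact hmod ⟨r.head, r.pos⟩ ⟨r, hr, hneg, rfl⟩ fun b hb => (hbody b hb).2
    exact fun h hh => (hmin _ hJ hh).1
end

section
/- Let Π be a normal non-deterministic logic program and I a stable non-deterministic model of Π. Then I is a minimal fixpoint of T'_Π: T'_Π(I) = I, and there is no interpretation J with J ⊊ I and T'_Π(J) = J. -/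
/-- Every stable non-deterministic model `I` of a normal non-deterministic
logic program is a minimal fixpoint of the operator `T'_Π`: `T'_Π(I) = I` and
no proper subset of `I` is a fixpoint of `T'_Π`. -/
theorem stable_minimal_fixpoint_nT' {B : Type*} (prog : Set (NNDRule B))
    (I : Set (Set B)) (hI : isStableND prog I) :
    nT' prog I = I ∧ ¬ ∃ J : Set (Set B), J ⊂ I ∧ nT' prog J = J := by
  obtain ⟨hmod, hleast⟩ := hI
  have hTI : nT' prog I ⊆ I := by
    rintro h ⟨r, hr, rfl, hpos, hneg⟩
    exact hmod ⟨r.head, r.pos⟩ ⟨r, hr, hneg, rfl⟩ hpos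
  have hIT : I ⊆ nT' prog I := by
    apply hleast
    rintro r' ⟨r, hr, hneg, rfl⟩ hpos
    exact ⟨r, hr, rfl, fun b hb => hTI (hpos b hb), hneg⟩
  refine ⟨Set.Subset.antisymm hTI hIT, ?_⟩
  rintro ⟨J, hJI, hJfix⟩
  have : I ⊆ J := by
    apply hleast
    rintro r' ⟨r, hr, hneg, rfl⟩ hpos
    have : r.head ∈ nT' prog J :=
      ⟨r, hr, rfl, hpos, fun b hb hbJ => hneg b hb (hJI.1 hbJ)⟩
    rwa [hJfix] at this
  exact hJI.2 this
end

section
/- Let Υ be a deterministic normal logic program over B and let Π be its translation into a normal non-deterministic logic program. Then I ⊆ B is a deterministic stable model of Υ if and only if the set {{a} | a ∈ I} of singleton non-deterministic atoms is a stable non-deterministic model of Π. -/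
/-- A deterministic normal logic rule over `B`: a head atom, a finite positive
body and a finite negative body of atoms. -/
structure DetNRule (B : Type*) where
  head : B
  pos : Finset B
  neg : Finset B

/-- The deterministic reduct of a deterministic normal logic program with
respect to `I ⊆ B`: the definite rules `head ← positive body` for each rule
whose negative body is disjoint from `I`. -/
def detReduct {B : Type*} (prog : Set (DetNRule B)) (I : Set B) : Set (DetRule B) :=
  {r' | ∃ r ∈ prog, (∀ b ∈ r.neg, b ∉ I) ∧ r' = ⟨r.head, r.pos⟩}

/-- `I` is a deterministic stable model of a deterministic normal logic program
if `I` equals the least Herbrand model of the deterministic reduct. -/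
def isDetStable {B : Type*} (prog : Set (DetNRule B)) (I : Set B) : Prop :=
  detModel (detReduct prog I) I ∧ ∀ J, detModel (detReduct prog I) J → I ⊆ J

/-- Translation of a deterministic normal rule: replace every atom by the
corresponding singleton non-deterministic atom. -/
def ndTranslateNRule {B : Type*} (r : DetNRule B) : NNDRule B :=
  ⟨{r.head}, r.pos.map (singEmb B), r.neg.map (singEmb B)⟩

/-- Translation of a deterministic normal logic program into a normal
non-deterministic logic program. -/
def ndTranslateN {B : Type*} (prog : Set (DetNRule B)) : Set (NNDRule B) :=
  ndTranslateNRule '' prog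

/-- `I ⊆ B` is a deterministic stable model of a deterministic normal logic
program `Υ` if and only if the set of singleton non-deterministic atoms
`{{a} | a ∈ I}` is a stable non-deterministic model of the translation of
`Υ`. -/
theorem detStable_iff_stableND_translate {B : Type*} (Υ : Set (DetNRule B)) (I : Set B) :
    isDetStable Υ I ↔ isStableND (ndTranslateN Υ) ((fun a => ({a} : Set B)) '' I) := by
  have hmem : ∀ (S : Set B) (a : B), ({a} : Set B) ∈ (fun a => ({a} : Set B)) '' S ↔ a ∈ S :=
    fun S a => Set.singleton_injective.mem_set_image
  constructor
  · rintro ⟨hmod, hmin⟩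
    constructor
    · rintro r' ⟨_, ⟨r, hr, rfl⟩, hneg, rfl⟩ hpos
      simp only [ndTranslateNRule] at hneg hpos ⊢
      rw [hmem]
      apply hmod ⟨r.head, r.pos⟩ ⟨r, hr, ?_, rfl⟩
      · intro b hb
        rw [← hmem I b]
        apply hpos
        simp only [Finset.mem_map, singEmb, Function.Embedding.coeFn_mk]
        exact ⟨b, hb, rfl⟩
      · intro b hb hbI
        refine hneg ({b} : Set B) ?_ ((hmem I b).2 hbI)
        simp only [Finset.mem_map, singEmb, Function.Embedding.coeFn_mk]
        exact ⟨b, hb, rfl⟩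
    · intro J hJ
      rintro _ ⟨a, haI, rfl⟩
      have hJ' : detModel (detReduct Υ I) {a | ({a} : Set B) ∈ J} := by
        rintro r' ⟨r, hr, hneg, rfl⟩ hpos
        refine hJ ⟨{r.head}, r.pos.map (singEmb B)⟩
          ⟨ndTranslateNRule r, ⟨r, hr, rfl⟩, ?_, rfl⟩ ?_
        · intro b hb hbI
          simp only [ndTranslateNRule, Finset.mem_map, singEmb,
            Function.Embedding.coeFn_mk] at hb
          obtain ⟨c, hc, rfl⟩ := hb
          exact hneg c hc ((hmem I c).1 hbI)
        · intro b hb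
          simp only [Finset.mem_map, singEmb, Function.Embedding.coeFn_mk] at hb
          obtain ⟨c, hc, rfl⟩ := hb
          exact hpos c hc
      exact hmin _ hJ' haI
  · rintro ⟨hmod, hmin⟩
    constructor
    · rintro r' ⟨r, hr, hneg, rfl⟩ hpos
      rw [← hmem I r.head]
      refine hmod ⟨{r.head}, r.pos.map (singEmb B)⟩
        ⟨ndTranslateNRule r, ⟨r, hr, rfl⟩, ?_, rfl⟩ ?_
      · intro b hb hbI
        simp only [ndTranslateNRule, Finset.mem_map, singEmb,
          Function.Embedding.coeFn_mk] at hb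
        obtain ⟨c, hc, rfl⟩ := hb
        exact hneg c hc ((hmem I c).1 hbI)
      · intro b hb
        simp only [Finset.mem_map, singEmb, Function.Embedding.coeFn_mk] at hb
        obtain ⟨c, hc, rfl⟩ := hb
        rw [hmem]
        exact hpos c hc
    · intro J hJ
      have hJ'' : ndModel (ndReduct (ndTranslateN Υ) ((fun a => ({a} : Set B)) '' I))
          {S : Set B | ∀ a, S = {a} → a ∈ J} := by
        rintro r' ⟨_, ⟨r, hr, rfl⟩, hneg, rfl⟩ hpos
        simp only [ndTranslateNRule] at hneg hpos ⊢
        intro a ha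
        have hhead : r.head = a := Set.singleton_injective ha
        subst hhead
        refine hJ ⟨r.head, r.pos⟩ ⟨r, hr, ?_, rfl⟩ ?_
        · intro b hb hbI
          refine hneg ({b} : Set B) ?_ ((hmem I b).2 hbI)
          simp only [Finset.mem_map, singEmb, Function.Embedding.coeFn_mk]
          exact ⟨b, hb, rfl⟩
        · intro b hb
          have := hpos ({b} : Set B) (by
            simp only [Finset.mem_map, singEmb, Function.Embedding.coeFn_mk]
            exact ⟨b, hb, rfl⟩)
          exact this b rfl
      intro a haI
      exact hmin _ hJ'' ⟨a, haI, rfl⟩ a rfl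
end
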